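/- In the type $B$ Hecke algebra, the elements $R_k(p)$ satisfy the Yang–Baxter equation for $k > 0$: $R_{k+1}(\mathbf{p}(a/b)) R_k(\mathbf{p}(ac)) R_{k+1}(\mathbf{p}(bc)) = R_k(\mathbf{p}(bc)) R_{k+1}(\mathbf{p}(ac)) R_k(\mathbf{p}(a/b))$, where $\mathbf{p}(z) = \frac{z-1}{z-q}$. -/

import Mathlib

noncomputable section

/-- The field of rational functions in the formal variables `q, t, ν, a, b, c`. -/
abbrev YBField : Type := FractionRing (MvPolynomial (Fin 6) ℚ)

/-- The formal variables, as elements of the rational function field. -/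
def ybVar (i : Fin 6) : YBField :=
  algebraMap (MvPolynomial (Fin 6) ℚ) YBField (MvPolynomial.X i)

private lemma yb_aux {K : Type*} [Field K] {H : Type*} [Ring H] [Algebra K H]
    (t u : H) (q p1 p2 p3 : K)
    (hbraid : t * u * t = u * t * u)
    (hqt : t * t = (1 - q) • t + q • (1 : H))
    (hqu : u * u = (1 - q) • u + q • (1 : H))
    (hkey : (1 - p2) * (p1 + p3 - (1 + q) * p1 * p3) = p2 * (1 - p1) * (1 - p3)) :
    (p1 • u + (1 - p1) • (1 : H)) * (p2 • t + (1 - p2) • (1 : H)) *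
        (p3 • u + (1 - p3) • (1 : H)) =
      (p3 • t + (1 - p3) • (1 : H)) * (p2 • u + (1 - p2) • (1 : H)) *
        (p1 • t + (1 - p1) • (1 : H)) := by
  have hbraid' : u * (t * u) = t * (u * t) := by
    rw [← mul_assoc, ← mul_assoc, hbraid]
  simp only [add_mul, mul_add, smul_mul_assoc, mul_smul_comm, one_mul, mul_one, smul_smul,
    mul_assoc]
  rw [hbraid', hqt, hqu]
  simp only [smul_add, smul_smul]
  match_scalars <;> first | ring1 | linear_combination hkey | linear_combination -hkey

set_option maxHeartbeats 1600000 in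
/-- In the type `B` Hecke algebra, with generators `T_k`, `T_{k+1}` (for `k > 0`) satisfying
the braid relation `T_k T_{k+1} T_k = T_{k+1} T_k T_{k+1}` and the quadratic relation
`(T + q)(T - 1) = 0`, the elements `R_k(p) = p T_k + (1 - p)` satisfy the Yang–Baxter
equation
`R_{k+1}(p(a/b)) R_k(p(ac)) R_{k+1}(p(bc)) = R_k(p(bc)) R_{k+1}(p(ac)) R_k(p(a/b))`,
where `p(z) = (z-1)/(z-q)`. -/
theorem hecke_yang_baxter
    {H : Type*} [Ring H] [Algebra YBField H]
    (Tk Tk1 : H)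
    (q : YBField) (hq : q = ybVar 0)
    (a : YBField) (ha : a = ybVar 3)
    (b : YBField) (hb : b = ybVar 4)
    (c : YBField) (hc : c = ybVar 5)
    (hbraid : Tk * Tk1 * Tk = Tk1 * Tk * Tk1)
    (hquadk : (Tk + algebraMap YBField H q) * (Tk - 1) = 0)
    (hquadk1 : (Tk1 + algebraMap YBField H q) * (Tk1 - 1) = 0)
    (R : H → YBField → H) (hR : ∀ (T : H) (p : YBField), R T p = p • T + (1 - p) • (1 : H))
    (pfun : YBField → YBField) (hp : ∀ z, pfun z = (z - 1) / (z - q)) :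
    R Tk1 (pfun (a / b)) * R Tk (pfun (a * c)) * R Tk1 (pfun (b * c)) =
      R Tk (pfun (b * c)) * R Tk1 (pfun (a * c)) * R Tk (pfun (a / b)) := by
  have inj : Function.Injective (algebraMap (MvPolynomial (Fin 6) ℚ) YBField) :=
    IsFractionRing.injective _ _
  -- nonvanishing facts
  have hb0 : b ≠ 0 := by
    rw [hb, ybVar]
    intro h
    exact MvPolynomial.X_ne_zero 4 ((map_eq_zero_iff _ inj).mp h)
  have hpoly2 : (MvPolynomial.X 3 * MvPolynomial.X 5 - MvPolynomial.X 0 :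
      MvPolynomial (Fin 6) ℚ) ≠ 0 := by
    intro h
    have := congrArg (MvPolynomial.eval (![0,1,1,2,3,5] : Fin 6 → ℚ)) h
    norm_num [MvPolynomial.eval_X, show (![0,1,1,2,3,5] : Fin 6 → ℚ) 5 = 5 from rfl,
      show (![0,1,1,2,3,5] : Fin 6 → ℚ) 4 = 3 from rfl,
      show (![0,1,1,2,3,5] : Fin 6 → ℚ) 3 = 2 from rfl,
      show (![0,1,1,2,3,5] : Fin 6 → ℚ) 0 = 0 from rfl] at this
  have hpoly3 : (MvPolynomial.X 4 * MvPolynomial.X 5 - MvPolynomial.X 0 :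
      MvPolynomial (Fin 6) ℚ) ≠ 0 := by
    intro h
    have := congrArg (MvPolynomial.eval (![0,1,1,2,3,5] : Fin 6 → ℚ)) h
    norm_num [MvPolynomial.eval_X, show (![0,1,1,2,3,5] : Fin 6 → ℚ) 5 = 5 from rfl,
      show (![0,1,1,2,3,5] : Fin 6 → ℚ) 4 = 3 from rfl,
      show (![0,1,1,2,3,5] : Fin 6 → ℚ) 3 = 2 from rfl,
      show (![0,1,1,2,3,5] : Fin 6 → ℚ) 0 = 0 from rfl] at this
  have hpoly1 : (MvPolynomial.X 3 - MvPolynomial.X 0 * MvPolynomial.X 4 :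
      MvPolynomial (Fin 6) ℚ) ≠ 0 := by
    intro h
    have := congrArg (MvPolynomial.eval (![0,1,1,2,3,5] : Fin 6 → ℚ)) h
    norm_num [MvPolynomial.eval_X, show (![0,1,1,2,3,5] : Fin 6 → ℚ) 5 = 5 from rfl,
      show (![0,1,1,2,3,5] : Fin 6 → ℚ) 4 = 3 from rfl,
      show (![0,1,1,2,3,5] : Fin 6 → ℚ) 3 = 2 from rfl,
      show (![0,1,1,2,3,5] : Fin 6 → ℚ) 0 = 0 from rfl] at this
  have h2 : a * c - q ≠ 0 := by
    have key : a * c - q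
        = algebraMap (MvPolynomial (Fin 6) ℚ) YBField
          (MvPolynomial.X 3 * MvPolynomial.X 5 - MvPolynomial.X 0) := by
      rw [ha, hc, hq, ybVar, ybVar, ybVar, map_sub, map_mul]
    rw [key]
    intro h
    exact hpoly2 ((map_eq_zero_iff _ inj).mp h)
  have h3 : b * c - q ≠ 0 := by
    have key : b * c - q
        = algebraMap (MvPolynomial (Fin 6) ℚ) YBField
          (MvPolynomial.X 4 * MvPolynomial.X 5 - MvPolynomial.X 0) := by
      rw [hb, hc, hq, ybVar, ybVar, ybVar, map_sub, map_mul]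
    rw [key]
    intro h
    exact hpoly3 ((map_eq_zero_iff _ inj).mp h)
  have hnum : a - q * b ≠ 0 := by
    have key : a - q * b
        = algebraMap (MvPolynomial (Fin 6) ℚ) YBField
          (MvPolynomial.X 3 - MvPolynomial.X 0 * MvPolynomial.X 4) := by
      rw [ha, hb, hq, ybVar, ybVar, ybVar, map_sub, map_mul]
    rw [key]
    intro h
    exact hpoly1 ((map_eq_zero_iff _ inj).mp h)
  have h1 : a / b - q ≠ 0 := by
    intro h
    have h'' := sub_eq_zero.mp h
    rw [div_eq_iff hb0] at h''
    exact hnum (by rw [h'']; ring)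
  -- the quadratic relations in smul form
  have hqt : Tk * Tk = (1 - q) • Tk + q • (1 : H) := by
    have h0 : Tk * Tk - ((1 - q) • Tk + q • (1 : H))
        = (Tk + algebraMap YBField H q) * (Tk - 1) := by
      rw [Algebra.smul_def, Algebra.smul_def, map_sub, map_one]
      noncomm_ring
    rw [hquadk] at h0
    exact sub_eq_zero.mp h0
  have hqu : Tk1 * Tk1 = (1 - q) • Tk1 + q • (1 : H) := by
    have h0 : Tk1 * Tk1 - ((1 - q) • Tk1 + q • (1 : H))
        = (Tk1 + algebraMap YBField H q) * (Tk1 - 1) := by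
      rw [Algebra.smul_def, Algebra.smul_def, map_sub, map_one]
      noncomm_ring
    rw [hquadk1] at h0
    exact sub_eq_zero.mp h0
  -- key scalar identity
  have hkey : (1 - pfun (a * c)) *
        (pfun (a / b) + pfun (b * c) - (1 + q) * pfun (a / b) * pfun (b * c))
      = pfun (a * c) * (1 - pfun (a / b)) * (1 - pfun (b * c)) := by
    have hP1 : pfun (a / b) = (a - b) / (a - q * b) := by
      have hbinv : b * b⁻¹ = 1 := mul_inv_cancel₀ hb0
      rw [hp, div_eq_div_iff h1 hnum]
      linear_combination (a - a * q) * hbinv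
    rw [hP1, hp, hp]
    have h3' : c * b - q ≠ 0 := by rwa [mul_comm c b]
    field_simp
    ring
  rw [hR, hR, hR, hR, hR, hR]
  exact yb_aux Tk Tk1 q (pfun (a / b)) (pfun (a * c)) (pfun (b * c)) hbraid hqt hqu hkey

end
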